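/- Let H be a spider graph whose center vertex has degree k, where 3 ≤ k ≤ 4. Then μ_int(K_1 ⊙ H) ≤ 2, where K_1 ⊙ H is the graph obtained from H by adding a single new universal vertex adjacent to every vertex of H. -/

import Mathlib

/-- An (improper) interval edge coloring: for every vertex, the set of colors on
incident edges forms an interval of consecutive integers. -/
def IsIntervalColoring {V : Type*} (G : SimpleGraph V) (c : Sym2 V → ℤ) : Prop :=
  ∀ v : V, ∀ a b x : ℤ,
    (∃ u, G.Adj v u ∧ c s(v, u) = a) → (∃ u, G.Adj v u ∧ c s(v, u) = b) →
    a ≤ x → x ≤ b → ∃ u, G.Adj v u ∧ c s(v, u) = x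

/-- A coloring is `k`-improper if at every vertex each color appears on at most
`k` incident edges. -/
def IsKImproper {V : Type*} (G : SimpleGraph V) (c : Sym2 V → ℤ) (k : ℕ) : Prop :=
  ∀ v : V, ∀ q : ℤ, ({u : V | G.Adj v u ∧ c s(v, u) = q}).ncard ≤ k

/-- The interval coloring impropriety `μ_int(G)`: the least `k` such that `G`
admits a `k`-improper interval edge coloring. -/
noncomputable def impropriety {V : Type*} (G : SimpleGraph V) : ℕ :=
  sInf {k : ℕ | ∃ c : Sym2 V → ℤ, IsIntervalColoring G c ∧ IsKImproper G c k}

/-- The maximum degree of a graph. -/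
noncomputable def maxDeg {V : Type*} (G : SimpleGraph V) : ℕ :=
  sSup {d : ℕ | ∃ v : V, (G.neighborSet v).ncard = d}

/-- The corona product `G ⊙ H`: take `G` and one copy of `H` for every vertex
of `G`, joining each vertex `v` of `G` to all vertices of its copy of `H`. -/
def corona {V W : Type*} (G : SimpleGraph V) (H : SimpleGraph W) :
    SimpleGraph (V ⊕ V × W) where
  Adj x y :=
    match x, y with
    | Sum.inl u, Sum.inl v => G.Adj u v
    | Sum.inl u, Sum.inr p => u = p.1
    | Sum.inr p, Sum.inl u => u = p.1
    | Sum.inr p, Sum.inr q => p.1 = q.1 ∧ H.Adj p.2 q.2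
  symm := by
    refine ⟨?_⟩
    rintro (u | p) (v | q) h
    · exact h.symm
    · exact h
    · exact h
    · exact ⟨h.1.symm, h.2.symm⟩
  loopless := by
    refine ⟨?_⟩
    rintro (u | p) h
    · exact G.loopless.irrefl u h
    · exact H.loopless.irrefl p.2 h.2

/-- `H` is a spider graph with center `c` of degree `k`: a tree in which `c` has
degree `k ≥ 3` and every other vertex has degree at most 2. -/
def IsSpider {W : Type*} (H : SimpleGraph W) (c : W) (k : ℕ) : Prop :=
  H.IsTree ∧ (H.neighborSet c).ncard = k ∧ 3 ≤ k ∧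
    ∀ w : W, w ≠ c → (H.neighborSet w).ncard ≤ 2

/-!
Root the spider `H` at its center `c` and give the legs distinct types `t ∈ {0, 1, 2, 3}`, with
types `0` and `1` present. On a leg of type `t`, the edge between depths `d - 1` and `d` gets
color `d + 1`, `d`, `2 - d`, `1 - d` respectively, and the apex edge at depth `d` gets `d + 1`,
`d`, `1 - d`, `-d`; this is always the color of one of the (at most two) tree edges at that
vertex, and those two colors are consecutive. So a leg vertex sees an interval of at most two
colors, each at most twice. The center sees `0` (apex), `2`, `1`, `1`, `0`. At the apex, a color
occurs at most once on legs of each parity, and moving to the parent moves the apex color one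
step towards `0`, so the apex colors form an interval.
-/

lemma Int.ordConnected_of_subset_pair {S : Set ℤ} {a b : ℤ} (hab : b = a + 1 ∨ b = a - 1)
    (hS : S ⊆ {a, b}) : S.OrdConnected := by
  refine Set.ordConnected_def.2 fun x hx y hy z ⟨hxz, hzy⟩ => ?_
  have hx' := hS hx
  have hy' := hS hy
  simp only [Set.mem_insert_iff, Set.mem_singleton_iff] at hx' hy'
  obtain rfl | rfl : z = x ∨ z = y := by omega
  exacts [hx, hy]

lemma Int.ordConnected_of_step_towards_zero {S : Set ℤ}
    (hpos : ∀ v ∈ S, 0 < v → v - 1 ∈ S) (hneg : ∀ v ∈ S, v < 0 → v + 1 ∈ S) :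
    S.OrdConnected := by
  have down : ∀ n : ℕ, ∀ z : ℤ, 0 ≤ z → z + n ∈ S → z ∈ S := by
    intro n
    induction n with
    | zero => simp
    | succ n ih =>
      intro z hz h
      exact ih z hz (by convert hpos _ h (by omega) using 1; push_cast; ring)
  have up : ∀ n : ℕ, ∀ z : ℤ, z ≤ 0 → z - n ∈ S → z ∈ S := by
    intro n
    induction n with
    | zero => simp
    | succ n ih =>
      intro z hz h
      exact ih z hz (by convert hneg _ h (by omega) using 1; push_cast; ring)
  refine Set.ordConnected_def.2 fun x hx y hy z ⟨hxz, hzy⟩ => ?_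
  rcases le_or_gt 0 z with hz | hz
  · exact down (y - z).toNat z hz (by rwa [Int.toNat_of_nonneg (by omega), add_sub_cancel])
  · exact up (z - x).toNat z hz.le (by rwa [Int.toNat_of_nonneg (by omega), sub_sub_cancel])

lemma isIntervalColoring_of_ordConnected {V : Type*} {G : SimpleGraph V} {col : Sym2 V → ℤ}
    (h : ∀ v, ((fun u => col s(v, u)) '' G.neighborSet v).OrdConnected) :
    IsIntervalColoring G col :=
  fun v _ _ _ ha hb hax hxb => (h v).out ha hb ⟨hax, hxb⟩

section CoronaColoring

variable {W : Type*} {H : SimpleGraph W}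

def coronaColoring (f : W → ℤ) (g : Sym2 W → ℤ) : Sym2 (Fin 1 ⊕ Fin 1 × W) → ℤ :=
  Sym2.lift ⟨fun x y => match x, y with
    | .inl _, .inl _ => 0
    | .inl _, .inr p => f p.2
    | .inr p, .inl _ => f p.2
    | .inr p, .inr q => g s(p.2, q.2), by rintro (_ | _) (_ | _) <;> simp [Sym2.eq_swap]⟩

variable (f : W → ℤ) (g : Sym2 W → ℤ)

lemma coronaColoring_image_inl (a : Fin 1) :
    (fun u => coronaColoring f g s(.inl a, u)) ''
      (corona (⊥ : SimpleGraph (Fin 1)) H).neighborSet (.inl a) = Set.range f := by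
  ext q
  constructor
  · rintro ⟨_ | p, hu, rfl⟩
    · exact (hu : False).elim
    · exact ⟨p.2, rfl⟩
  · rintro ⟨w, rfl⟩
    exact ⟨.inr (a, w), rfl, rfl⟩

lemma coronaColoring_image_inr (p : Fin 1 × W) :
    (fun u => coronaColoring f g s(.inr p, u)) ''
      (corona (⊥ : SimpleGraph (Fin 1)) H).neighborSet (.inr p) =
      insert (f p.2) ((fun x => g s(p.2, x)) '' H.neighborSet p.2) := by
  ext q
  constructor
  · rintro ⟨_ | r, hu, rfl⟩
    · exact .inl rfl
    · exact .inr ⟨r.2, hu.2, rfl⟩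
  · rintro (rfl | ⟨x, hx, rfl⟩)
    · exact ⟨.inl p.1, rfl, rfl⟩
    · exact ⟨.inr (p.1, x), ⟨rfl, hx⟩, rfl⟩

variable [Finite W]

lemma ncard_coronaColoring_inl_le (a : Fin 1) (q : ℤ) :
    {u | (corona (⊥ : SimpleGraph (Fin 1)) H).Adj (.inl a) u ∧
      coronaColoring f g s(.inl a, u) = q}.ncard ≤ {w | f w = q}.ncard := by
  refine (Set.ncard_le_ncard (t := (fun w => .inr (a, w)) '' {w | f w = q}) ?_).trans
    (Set.ncard_image_le (Set.toFinite _))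
  rintro (_ | p) ⟨hu, rfl⟩
  · exact (hu : False).elim
  · exact ⟨p.2, rfl, by rw [Subsingleton.elim a p.1]⟩

lemma ncard_coronaColoring_inr_le (p : Fin 1 × W) (q : ℤ) :
    {u | (corona (⊥ : SimpleGraph (Fin 1)) H).Adj (.inr p) u ∧
      coronaColoring f g s(.inr p, u) = q}.ncard ≤
      {x | H.Adj p.2 x ∧ g s(p.2, x) = q}.ncard + if f p.2 = q then 1 else 0 := by
  have hsub : {u | (corona (⊥ : SimpleGraph (Fin 1)) H).Adj (.inr p) u ∧
      coronaColoring f g s(.inr p, u) = q} ⊆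
      (fun x => .inr (p.1, x)) '' {x | H.Adj p.2 x ∧ g s(p.2, x) = q} ∪
        .inl '' {_a : Fin 1 | f p.2 = q} := by
    rintro (a | r) ⟨hu, rfl⟩
    · exact .inr ⟨a, rfl, rfl⟩
    · exact .inl ⟨r.2, ⟨hu.2, rfl⟩, by rw [hu.1]⟩
  have hapex : {_a : Fin 1 | f p.2 = q}.ncard = if f p.2 = q then 1 else 0 := by
    split_ifs with h <;> simp [h]
  calc _ ≤ _ := Set.ncard_le_ncard hsub
    _ ≤ _ := Set.ncard_union_le _ _
    _ ≤ _ := by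
      rw [← hapex]
      exact add_le_add (Set.ncard_image_le (Set.toFinite _)) (Set.ncard_image_le (Set.toFinite _))

theorem impropriety_corona_le (k : ℕ) (hf : (Set.range f).OrdConnected)
    (hfk : ∀ q, {w | f w = q}.ncard ≤ k)
    (hg : ∀ w, (insert (f w) ((fun x => g s(w, x)) '' H.neighborSet w)).OrdConnected)
    (hgk : ∀ w q, {x | H.Adj w x ∧ g s(w, x) = q}.ncard + (if f w = q then 1 else 0) ≤ k) :
    impropriety (corona (⊥ : SimpleGraph (Fin 1)) H) ≤ k := by
  refine Nat.sInf_le ⟨coronaColoring f g, isIntervalColoring_of_ordConnected ?_, ?_⟩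
  · rintro (a | p)
    · rwa [coronaColoring_image_inl]
    · rw [coronaColoring_image_inr]
      exact hg p.2
  · rintro (a | p) q
    · exact (ncard_coronaColoring_inl_le f g a q).trans (hfk q)
    · exact (ncard_coronaColoring_inr_le f g p q).trans (hgk p.2 q)

end CoronaColoring

namespace SimpleGraph

variable {W : Type*} {H : SimpleGraph W} {c w w' x y : W}

lemma dist_le_length_of_mem_support (p : H.Walk c w) (hx : x ∈ p.support) :
    H.dist c x ≤ p.length := by
  classical
  exact (dist_le (p.takeUntil x hx)).trans (p.length_takeUntil_le_length hx)

lemma Connected.exists_adj_dist_add_one_eq (hH : H.Connected) (hw : w ≠ c) :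
    ∃ x, H.Adj x w ∧ H.dist c x + 1 = H.dist c w := by
  obtain ⟨p, -, hp⟩ := hH.exists_path_of_dist c w
  have hnil : ¬ p.Nil := fun h => hw (h.eq).symm
  refine ⟨p.penultimate, Walk.adj_penultimate hnil, ?_⟩
  have hle := (dist_le p.dropLast).trans_eq p.length_dropLast
  have hpos := hH.pos_dist_of_ne (Ne.symm hw)
  rcases (Walk.adj_penultimate hnil).diff_dist_adj (u := c) with h | h | h <;> omega

lemma notMem_support_of_dist_lt (p : H.Walk c x) (hp : p.length = H.dist c x)
    (hlt : H.dist c x < H.dist c w) : w ∉ p.support :=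
  fun hw => (dist_le_length_of_mem_support p hw).not_gt (hp ▸ hlt)

lemma IsTree.eq_of_adj_of_dist_add_one_eq (hH : H.IsTree) (hx : H.Adj x w) (hy : H.Adj y w)
    (hxd : H.dist c x + 1 = H.dist c w) (hyd : H.dist c y + 1 = H.dist c w) : x = y := by
  obtain ⟨p, hp, hpl⟩ := hH.connected.exists_path_of_dist c x
  obtain ⟨q, hq, hql⟩ := hH.connected.exists_path_of_dist c y
  have hpw := hp.concat (notMem_support_of_dist_lt p hpl (by omega)) hx
  have hqw := hq.concat (notMem_support_of_dist_lt q hql (by omega)) hy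
  have := congrArg (fun r : H.Path c w => r.1.penultimate)
    ((hH.isAcyclic.subsingleton_path c w).elim ⟨_, hpw⟩ ⟨_, hqw⟩)
  simpa only [Walk.penultimate_concat] using this

open Classical in
/-- The first vertex after `c` on a path from `c` to `w`; in a tree it does not depend on the
path. -/
noncomputable def branch (H : SimpleGraph W) (c w : W) : W :=
  if h : H.Reachable c w then h.some.bypass.snd else w

lemma IsTree.snd_eq_branch (hH : H.IsTree) {p : H.Walk c w} (hp : p.IsPath) :
    p.snd = H.branch c w := by
  classical
  rw [branch, dif_pos (hH.connected c w)]
  exact congrArg (fun r : H.Path c w => r.1.snd)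
    ((hH.isAcyclic.subsingleton_path c w).elim ⟨p, hp⟩ ⟨_, Walk.bypass_isPath _⟩)

lemma IsTree.adj_branch (hH : H.IsTree) (hw : w ≠ c) : H.Adj c (H.branch c w) := by
  obtain ⟨p, hp, -⟩ := hH.connected.exists_path_of_dist c w
  rw [← hH.snd_eq_branch hp]
  exact Walk.adj_snd fun h => hw h.eq.symm

lemma IsTree.branch_eq_self (hH : H.IsTree) (h : H.Adj c w) : H.branch c w = w :=
  (hH.snd_eq_branch (Walk.IsPath.mk' (by simp [h.ne]) : (Walk.cons h Walk.nil).IsPath)).symm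

lemma IsTree.branch_eq_of_adj (hH : H.IsTree) (hx : x ≠ c) (hxw : H.Adj x w)
    (hd : H.dist c x + 1 = H.dist c w) : H.branch c w = H.branch c x := by
  obtain ⟨p, hp, hpl⟩ := hH.connected.exists_path_of_dist c x
  have hpw := hp.concat (notMem_support_of_dist_lt p hpl (by omega)) hxw
  have hnil : ¬ p.Nil := fun h => hx h.eq.symm
  rw [← hH.snd_eq_branch hp, ← hH.snd_eq_branch hpw]
  exact (hH.isAcyclic.eq_snd_of_adj_start hpw (Walk.adj_snd hnil)
    (p.support_subset_support_concat hxw (p.getVert_mem_support 1))).symm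

lemma Connected.eq_of_adj_of_dist_eq_add_one [Finite W] (hH : H.Connected)
    (hdeg : (H.neighborSet w).ncard ≤ 2) (hw : w ≠ c) (hx : H.Adj w x) (hy : H.Adj w y)
    (hxd : H.dist c x = H.dist c w + 1) (hyd : H.dist c y = H.dist c w + 1) : x = y := by
  obtain ⟨z, hzw, hzd⟩ := hH.exists_adj_dist_add_one_eq hw
  by_contra hxy
  have h3 : ({x, y, z} : Set W).ncard = 3 :=
    Set.ncard_eq_three.2 ⟨x, y, z, hxy, by rintro rfl; omega, by rintro rfl; omega, rfl⟩
  have hsub : ({x, y, z} : Set W) ⊆ H.neighborSet w := by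
    rintro v (rfl | rfl | rfl)
    exacts [hx, hy, hzw.symm]
  have := Set.ncard_le_ncard hsub
  omega

lemma IsTree.eq_of_branch_eq_of_dist_eq [Finite W] (hH : H.IsTree)
    (hdeg : ∀ w, w ≠ c → (H.neighborSet w).ncard ≤ 2) (hw : w ≠ c) (hw' : w' ≠ c)
    (hb : H.branch c w = H.branch c w') (hd : H.dist c w = H.dist c w') : w = w' := by
  induction hn : H.dist c w generalizing w w' with
  | zero => exact absurd ((hH.connected.dist_eq_zero_iff).1 hn).symm hw
  | succ n ih =>
    obtain ⟨x, hxw, hxd⟩ := hH.connected.exists_adj_dist_add_one_eq hw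
    obtain ⟨x', hxw', hxd'⟩ := hH.connected.exists_adj_dist_add_one_eq hw'
    rcases Nat.eq_zero_or_pos n with rfl | hn0
    · have hcw : H.Adj c w := dist_eq_one_iff_adj.1 hn
      have hcw' : H.Adj c w' := dist_eq_one_iff_adj.1 (hd ▸ hn)
      rw [← hH.branch_eq_self hcw, hb, hH.branch_eq_self hcw']
    · have hx : x ≠ c := by rintro rfl; simp at hxd; omega
      have hx' : x' ≠ c := by rintro rfl; simp at hxd'; omega
      have hxx' : x = x' := ih hx hx' (by rw [← hH.branch_eq_of_adj hx hxw hxd, hb,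
        hH.branch_eq_of_adj hx' hxw' hxd']) (by omega) (by omega)
      subst hxx'
      exact hH.connected.eq_of_adj_of_dist_eq_add_one (hdeg x hx) hx hxw hxw'
        (by omega) (by omega)

end SimpleGraph

/-- Color of the edge between depths `d - 1` and `d` on a leg of type `t`. -/
def legColor : ℕ → ℕ → ℤ
  | 0, d => d + 1
  | 1, d => d
  | 2, d => 2 - d
  | _, d => 1 - d

/-- Color of the edge from the apex to the vertex at depth `d` on a leg of type `t`. -/
def apexColor : ℕ → ℕ → ℤ
  | 0, d => d + 1
  | 1, d => d
  | 2, d => 1 - d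
  | _, d => -d

lemma legColor_succ (t d : ℕ) :
    legColor t (d + 1) = legColor t d + 1 ∨ legColor t (d + 1) = legColor t d - 1 := by
  rcases t with _ | _ | _ | t <;> simp only [legColor] <;> push_cast <;> omega

lemma apexColor_eq_legColor_or (t d : ℕ) :
    apexColor t d = legColor t d ∨ apexColor t d = legColor t (d + 1) := by
  rcases t with _ | _ | _ | t <;> simp only [legColor, apexColor, true_or] <;> push_cast <;> omega

lemma apexColor_of_pos {t d : ℕ} (h : 0 < apexColor t (d + 1)) :
    apexColor t d = apexColor t (d + 1) - 1 := by
  rcases t with _ | _ | _ | t <;> simp only [apexColor] at h ⊢ <;> push_cast at h ⊢ <;> omega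

lemma apexColor_of_neg {t d : ℕ} (h : apexColor t (d + 1) < 0) :
    apexColor t d = apexColor t (d + 1) + 1 := by
  rcases t with _ | _ | _ | t <;> simp only [apexColor] at h ⊢ <;> push_cast at h ⊢ <;> omega

lemma apexColor_zero (t : ℕ) : apexColor t 0 = 0 ∨ apexColor t 0 = 1 := by
  rcases t with _ | _ | _ | t <;> simp [apexColor]

lemma apexColor_inj {t t' d d' : ℕ} (ht : t < 4) (ht' : t' < 4) (hd : t = 3 ∨ 0 < d)
    (hd' : t' = 3 ∨ 0 < d') (hpar : t % 2 = t' % 2) (h : apexColor t d = apexColor t' d') :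
    t = t' ∧ d = d' := by
  interval_cases t <;> interval_cases t' <;> simp only [apexColor] at h <;> omega

lemma legColor_one_mem_Icc (t : ℕ) : legColor t 1 ∈ Set.Icc 0 2 := by
  rcases t with _ | _ | _ | t <;> simp [legColor]

lemma legColor_one_inj {t t' : ℕ} (ht : t < 4) (ht' : t' < 4) (hpar : t % 2 = t' % 2)
    (h : legColor t 1 = legColor t' 1) : t = t' := by
  interval_cases t <;> interval_cases t' <;> simp_all [legColor]

lemma legColor_one_eq_zero {t : ℕ} (ht : t < 4) (h : legColor t 1 = 0) : t = 3 := by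
  interval_cases t <;> simp_all [legColor]

section SpiderColoring

open SimpleGraph

variable {W : Type*} (H : SimpleGraph W) (c : W) (τ : W → ℕ)

open Classical in
/-- The type of the leg through `w`. The center counts as depth `0` of a leg of type `3`, which
is consistent with `apexColor 3 0 = 0`. -/
noncomputable def legType (w : W) : ℕ := if w = c then 3 else τ (H.branch c w)

noncomputable def spiderApexColoring (w : W) : ℤ := apexColor (legType H c τ w) (H.dist c w)

noncomputable def spiderEdgeColoring : Sym2 W → ℤ :=
  Sym2.lift ⟨fun x y =>
    if H.dist c x < H.dist c y then legColor (legType H c τ y) (H.dist c y)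
    else if H.dist c y < H.dist c x then legColor (legType H c τ x) (H.dist c x) else 0,
    fun x y => by dsimp only; split_ifs <;> first | rfl | omega⟩

variable {H c τ} {w x y : W}

lemma legType_center : legType H c τ c = 3 := if_pos rfl

lemma legType_of_ne (hw : w ≠ c) : legType H c τ w = τ (H.branch c w) := if_neg hw

lemma spiderApexColoring_center : spiderApexColoring H c τ c = 0 := by
  simp [spiderApexColoring, legType_center, apexColor]

lemma spiderEdgeColoring_of_dist_lt (h : H.dist c x < H.dist c y) :
    spiderEdgeColoring H c τ s(x, y) = legColor (legType H c τ y) (H.dist c y) := if_pos h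

lemma spiderEdgeColoring_of_dist_gt (h : H.dist c y < H.dist c x) :
    spiderEdgeColoring H c τ s(x, y) = legColor (legType H c τ x) (H.dist c x) := by
  rw [Sym2.eq_swap]
  exact spiderEdgeColoring_of_dist_lt h

lemma legType_lt_four (hH : H.IsTree) (hτ4 : Set.MapsTo τ (H.neighborSet c) (Set.Iio 4))
    (w : W) : legType H c τ w < 4 := by
  by_cases hw : w = c
  · simp [hw, legType_center]
  · rw [legType_of_ne hw]
    exact hτ4 (hH.adj_branch hw)

lemma legType_eq_three_or_dist_pos (hH : H.IsTree) (w : W) :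
    legType H c τ w = 3 ∨ 0 < H.dist c w := by
  by_cases hw : w = c
  · exact .inl (hw ▸ legType_center)
  · exact .inr (hH.connected.pos_dist_of_ne (Ne.symm hw))

lemma legType_of_adj_center (hH : H.IsTree) (hx : H.Adj c x) : legType H c τ x = τ x := by
  rw [legType_of_ne hx.ne', hH.branch_eq_self hx]

lemma legType_eq_of_adj (hH : H.IsTree) (hx : x ≠ c) (hxw : H.Adj x w)
    (hd : H.dist c x + 1 = H.dist c w) : legType H c τ w = legType H c τ x := by
  have hw : w ≠ c := by rintro rfl; simp at hd
  rw [legType_of_ne hw, legType_of_ne hx, hH.branch_eq_of_adj hx hxw hd]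

lemma eq_of_legType_eq_of_dist_eq [Finite W] (hH : H.IsTree)
    (hdeg : ∀ w, w ≠ c → (H.neighborSet w).ncard ≤ 2) (hτ : Set.InjOn τ (H.neighborSet c))
    {w w' : W} (ht : legType H c τ w = legType H c τ w') (hd : H.dist c w = H.dist c w') :
    w = w' := by
  have hcenter : ∀ {v}, H.dist c v = 0 → v = c := fun h => (hH.connected.dist_eq_zero_iff.1 h).symm
  by_cases hw : w = c
  · subst hw
    exact (hcenter (by simpa using hd.symm)).symm
  by_cases hw' : w' = c
  · subst hw'
    exact hcenter (by simpa using hd)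
  rw [legType_of_ne hw, legType_of_ne hw'] at ht
  exact hH.eq_of_branch_eq_of_dist_eq hdeg hw hw'
    (hτ (hH.adj_branch hw) (hH.adj_branch hw') ht) hd

lemma ordConnected_range_spiderApexColoring (hH : H.IsTree)
    (hτ1 : ∃ x, H.Adj c x ∧ τ x = 1) : (Set.range (spiderApexColoring H c τ)).OrdConnected := by
  have hparent : ∀ w, spiderApexColoring H c τ w ≠ 0 → ∃ d, d + 1 = H.dist c w ∧
      apexColor (legType H c τ w) d ∈ Set.range (spiderApexColoring H c τ) := by
    intro w hw
    have hwc : w ≠ c := by rintro rfl; exact hw spiderApexColoring_center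
    obtain ⟨x, hxw, hxd⟩ := hH.connected.exists_adj_dist_add_one_eq hwc
    refine ⟨_, hxd, ?_⟩
    by_cases hx : x = c
    · subst hx
      obtain ⟨n, hn, hn1⟩ := hτ1
      rcases apexColor_zero (legType H x τ w) with h | h <;> rw [SimpleGraph.dist_self, h]
      · exact ⟨x, spiderApexColoring_center⟩
      · refine ⟨n, ?_⟩
        simp [spiderApexColoring, legType_of_adj_center hH hn, hn1, dist_eq_one_iff_adj.2 hn,
          apexColor]
    · exact ⟨x, by rw [spiderApexColoring, legType_eq_of_adj hH hx hxw hxd]⟩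
  apply Int.ordConnected_of_step_towards_zero
  · rintro _ ⟨w, rfl⟩ hpos
    obtain ⟨d, hd, hmem⟩ := hparent w hpos.ne'
    rw [spiderApexColoring, ← hd] at hpos ⊢
    rwa [← apexColor_of_pos hpos]
  · rintro _ ⟨w, rfl⟩ hneg
    obtain ⟨d, hd, hmem⟩ := hparent w hneg.ne
    rw [spiderApexColoring, ← hd] at hneg ⊢
    rwa [← apexColor_of_neg hneg]

/-- Parity of the leg type separates the (at most two) vertices with a given apex color. -/
lemma ncard_spiderApexColoring_le_two [Finite W] (hH : H.IsTree)
    (hdeg : ∀ w, w ≠ c → (H.neighborSet w).ncard ≤ 2) (hτ : Set.InjOn τ (H.neighborSet c))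
    (hτ4 : Set.MapsTo τ (H.neighborSet c) (Set.Iio 4)) (q : ℤ) :
    {w | spiderApexColoring H c τ w = q}.ncard ≤ 2 := by
  refine (Set.ncard_le_ncard_of_injOn (fun w => legType H c τ w % 2) (t := Set.Iio 2)
    (fun w _ => Nat.mod_lt _ two_pos) ?_).trans (Set.ncard_Iio_nat 2).le
  intro w hw w' hw' hpar
  obtain ⟨ht, hd⟩ := apexColor_inj (legType_lt_four hH hτ4 w) (legType_lt_four hH hτ4 w')
    (legType_eq_three_or_dist_pos hH w) (legType_eq_three_or_dist_pos hH w') hpar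
    (hw.trans hw'.symm)
  exact eq_of_legType_eq_of_dist_eq hH hdeg hτ ht hd

lemma spiderEdgeColoring_of_adj (hH : H.IsTree) (hw : w ≠ c) (hx : H.Adj w x) :
    (spiderEdgeColoring H c τ s(w, x) = legColor (legType H c τ w) (H.dist c w) ∧
      H.dist c x + 1 = H.dist c w) ∨
    (spiderEdgeColoring H c τ s(w, x) = legColor (legType H c τ w) (H.dist c w + 1) ∧
      H.dist c x = H.dist c w + 1) := by
  rcases hH.dist_eq_dist_add_one_of_adj c hx with h | h
  · exact .inl ⟨spiderEdgeColoring_of_dist_gt (by omega), h.symm⟩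
  · refine .inr ⟨?_, h⟩
    rw [spiderEdgeColoring_of_dist_lt (by omega), legType_eq_of_adj hH hw hx h.symm, h]

lemma ordConnected_colors_of_ne_center (hH : H.IsTree) (hw : w ≠ c) :
    (insert (spiderApexColoring H c τ w)
      ((fun x => spiderEdgeColoring H c τ s(w, x)) '' H.neighborSet w)).OrdConnected := by
  refine Int.ordConnected_of_subset_pair (legColor_succ (legType H c τ w) (H.dist c w)) ?_
  rintro _ (rfl | ⟨x, hx, rfl⟩)
  · exact apexColor_eq_legColor_or _ _
  · rcases spiderEdgeColoring_of_adj hH hw hx with ⟨h, -⟩ | ⟨h, -⟩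
    exacts [.inl h, .inr h]

lemma ncard_colors_of_ne_center [Finite W] (hH : H.IsTree)
    (hdeg : ∀ w, w ≠ c → (H.neighborSet w).ncard ≤ 2) (hw : w ≠ c) (q : ℤ) :
    {x | H.Adj w x ∧ spiderEdgeColoring H c τ s(w, x) = q}.ncard +
      (if spiderApexColoring H c τ w = q then 1 else 0) ≤ 2 := by
  have hle : {x | H.Adj w x ∧ spiderEdgeColoring H c τ s(w, x) = q}.ncard ≤ 1 := by
    refine (Set.ncard_le_one_iff).2 fun {x y} ⟨hx, hxq⟩ ⟨hy, hyq⟩ => ?_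
    have hsucc := legColor_succ (legType H c τ w) (H.dist c w)
    rcases spiderEdgeColoring_of_adj hH hw hx with ⟨hxc, hxd⟩ | ⟨hxc, hxd⟩ <;>
      rcases spiderEdgeColoring_of_adj hH hw hy with ⟨hyc, hyd⟩ | ⟨hyc, hyd⟩
    · exact hH.eq_of_adj_of_dist_add_one_eq hx.symm hy.symm hxd hyd
    · exfalso; rcases hsucc with h | h <;> linarith
    · exfalso; rcases hsucc with h | h <;> linarith
    · exact hH.connected.eq_of_adj_of_dist_eq_add_one (hdeg w hw) hw hx hy hxd hyd
  split_ifs <;> omega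

lemma spiderEdgeColoring_center (hH : H.IsTree) (hx : H.Adj c x) :
    spiderEdgeColoring H c τ s(c, x) = legColor (τ x) 1 := by
  rw [spiderEdgeColoring_of_dist_lt (by simp [dist_eq_one_iff_adj.2 hx]),
    legType_of_adj_center hH hx, dist_eq_one_iff_adj.2 hx]

lemma ordConnected_colors_center (hH : H.IsTree) (hτ01 : ∀ i < 2, ∃ x, H.Adj c x ∧ τ x = i) :
    (insert (spiderApexColoring H c τ c)
      ((fun x => spiderEdgeColoring H c τ s(c, x)) '' H.neighborSet c)).OrdConnected := by
  convert Set.ordConnected_Icc (a := (0 : ℤ)) (b := 2)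
  refine Set.Subset.antisymm ?_ fun q hq => ?_
  · rintro _ (rfl | ⟨x, hx, rfl⟩)
    · simp [spiderApexColoring_center]
    · simpa only [spiderEdgeColoring_center hH hx] using legColor_one_mem_Icc (τ x)
  · obtain ⟨h0, h2⟩ := hq
    obtain rfl | hq := eq_or_ne q 0
    · exact .inl spiderApexColoring_center.symm
    obtain ⟨x, hx, hτx⟩ := hτ01 (2 - q).toNat (by omega)
    refine .inr ⟨x, hx, ?_⟩
    simp only [spiderEdgeColoring_center hH hx, hτx]
    interval_cases q
    · exact absurd rfl hq
    all_goals rfl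

lemma ncard_colors_center [Finite W] (hH : H.IsTree) (hτ : Set.InjOn τ (H.neighborSet c))
    (hτ4 : Set.MapsTo τ (H.neighborSet c) (Set.Iio 4)) (q : ℤ) :
    {x | H.Adj c x ∧ spiderEdgeColoring H c τ s(c, x) = q}.ncard +
      (if spiderApexColoring H c τ c = q then 1 else 0) ≤ 2 := by
  have hcolor : ∀ {x}, x ∈ {x | H.Adj c x ∧ spiderEdgeColoring H c τ s(c, x) = q} →
      H.Adj c x ∧ legColor (τ x) 1 = q ∧ τ x < 4 := fun ⟨hx, hxq⟩ =>
    ⟨hx, (spiderEdgeColoring_center hH hx).symm.trans hxq, hτ4 hx⟩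
  rw [spiderApexColoring_center]
  split_ifs with hq
  · subst hq
    suffices {x | H.Adj c x ∧ spiderEdgeColoring H c τ s(c, x) = 0}.ncard ≤ 1 by omega
    refine (Set.ncard_le_one_iff).2 fun {x y} hx hy => ?_
    obtain ⟨hx, hx0, hx4⟩ := hcolor hx
    obtain ⟨hy, hy0, hy4⟩ := hcolor hy
    exact hτ hx hy ((legColor_one_eq_zero hx4 hx0).trans (legColor_one_eq_zero hy4 hy0).symm)
  · refine (Set.ncard_le_ncard_of_injOn (fun x => τ x % 2) (t := Set.Iio 2)
      (fun x _ => Nat.mod_lt _ two_pos) ?_).trans (Set.ncard_Iio_nat 2).le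
    intro x hx y hy hpar
    obtain ⟨hx, hxq, hx4⟩ := hcolor hx
    obtain ⟨hy, hyq, hy4⟩ := hcolor hy
    exact hτ hx hy (legColor_one_inj hx4 hy4 hpar (hxq.trans hyq.symm))

end SpiderColoring

theorem impropriety_corona_le_two_of_spider {W : Type*} [Finite W] {H : SimpleGraph W} {c : W} {τ : W → ℕ}
    (hH : H.IsTree) (hdeg : ∀ w, w ≠ c → (H.neighborSet w).ncard ≤ 2)
    (hτ : Set.InjOn τ (H.neighborSet c)) (hτ4 : Set.MapsTo τ (H.neighborSet c) (Set.Iio 4))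
    (hτ01 : ∀ i < 2, ∃ x, H.Adj c x ∧ τ x = i) :
    impropriety (corona (⊥ : SimpleGraph (Fin 1)) H) ≤ 2 := by
  refine impropriety_corona_le (spiderApexColoring H c τ) (spiderEdgeColoring H c τ) 2
    (ordConnected_range_spiderApexColoring hH (hτ01 1 one_lt_two))
    (ncard_spiderApexColoring_le_two hH hdeg hτ hτ4) (fun w => ?_) (fun w => ?_)
  all_goals obtain rfl | hw := eq_or_ne w c
  · exact ordConnected_colors_center hH hτ01
  · exact ordConnected_colors_of_ne_center hH hw
  · exact ncard_colors_center hH hτ hτ4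
  · exact ncard_colors_of_ne_center hH hdeg hw

theorem stmt11_general {W : Type*} [Fintype W] (H : SimpleGraph W) (c : W) (k : ℕ)
    (hH : IsSpider H c k) (hk4 : k ≤ 4) :
    impropriety (corona (⊥ : SimpleGraph (Fin 1)) H) ≤ 2 := by
  obtain ⟨hT, hcard, hk3, hdeg⟩ := hH
  have hencard : (H.neighborSet c).encard = (Set.Iio k).encard := by
    rw [← (Set.toFinite _).cast_ncard_eq, ← (Set.toFinite _).cast_ncard_eq, hcard,
      Set.ncard_Iio_nat]
  obtain ⟨τ, hτ⟩ := (Set.toFinite _).exists_bijOn_of_encard_eq hencard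
  refine impropriety_corona_le_two_of_spider hT hdeg hτ.injOn
    (fun x hx => lt_of_lt_of_le (hτ.mapsTo hx) hk4) fun i hi => ?_
  obtain ⟨x, hx, rfl⟩ := hτ.surjOn (show i < k by omega)
  exact ⟨x, hx, rfl⟩

/-- If `H` is a spider graph whose center has degree `k` with `3 ≤ k ≤ 4`, then
`μ_int(K_1 ⊙ H) ≤ 2`. -/
theorem stmt11 {W : Type*} [Fintype W] (H : SimpleGraph W) (c : W) (k : ℕ)
    (hH : IsSpider H c k) (hk3 : 3 ≤ k) (hk4 : k ≤ 4) :
    impropriety (corona (⊥ : SimpleGraph (Fin 1)) H) ≤ 2 :=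
  stmt11_general H c k hH hk4
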